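/- arXiv:1910.04343 — 3 statements merged into one kernel-verified Lean document; each statement's English description precedes it below -/
import Mathlib

section
/- Let I be an index set, ε = (ε_{a,b})_{a,b∈I} a symmetric matrix with entries in {0,1} and ε_{a,a} = 0 for all a, S a set, and for each ι ∈ I a subset K_ι ⊆ S such that K_a ∩ K_b ≠ ∅ whenever a ≠ b and ε_{a,b} = 0. Suppose k ≥ 1 and (ι_1, …, ι_k) ∈ I_k^ε. Let σ be a permutation of {1, …, k} satisfying ι_{σ(j)} = ι_j for all j, and suppose that for every s ∈ S the partition of J_s := {j ∈ {1,…,k} : s ∈ K_{ι_j}} into orbits of σ (note σ preserves each J_s) is a noncrossing partition of J_s. Then σ has at least one fixed point. -/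
/-!
Suppose `σ` has no fixed point, and take a pair `p < r` in one cycle of `σ` with no other pair of
a common cycle strictly between them. The word `ι` is constant on cycles, so `ι p = ι r`, and the
defining property of `I_k^ε` yields `p < m < r` with `ι m ≠ ι p` and `ε (ι p) (ι m) = 0`; hence
some `s` lies in `K (ι p) ∩ K (ι m)`. Then `p, m, r` and `σ m ≠ m` all lie in `J_s`, and
noncrossing forces `σ m` strictly between `p` and `r`, so `m, σ m` is an inner pair of a common
cycle.
-/

namespace Equiv.Perm

variable {α β : Type*}

theorem apply_zpow_apply_of_invariant {σ : Perm α} {f : α → β} (hf : ∀ x, f (σ x) = f x)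
    (n : ℤ) (x : α) : f ((σ ^ n) x) = f x := by
  induction n using Int.induction_on generalizing x with
  | zero => rfl
  | succ n ih => rw [zpow_add_one, mul_apply, ih, hf]
  | pred n ih =>
    rw [zpow_sub_one, mul_apply, ih, ← hf (σ⁻¹ x), ← mul_apply, mul_inv_cancel, one_apply]

theorem SameCycle.apply_eq_of_invariant {σ : Perm α} {f : α → β} (hf : ∀ x, f (σ x) = f x)
    {x y : α} (h : σ.SameCycle x y) : f x = f y := by
  obtain ⟨n, rfl⟩ := h
  exact (apply_zpow_apply_of_invariant hf n x).symm

variable [LinearOrder α]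

theorem exists_lt_sameCycle_of_apply_ne {σ : Perm α} {x : α} (hx : σ x ≠ x) :
    ∃ p r, p < r ∧ σ.SameCycle p r := by
  have hxσ : σ.SameCycle x (σ x) := sameCycle_apply_right.2 .rfl
  rcases lt_or_gt_of_ne hx with h | h
  · exact ⟨σ x, x, h, hxσ.symm⟩
  · exact ⟨x, σ x, h, hxσ⟩

def IsNoncrossingOn (σ : Perm α) (J : Set α) : Prop :=
  ∀ p q r t, p ∈ J → q ∈ J → r ∈ J → t ∈ J → p < q → q < r → r < t →
    σ.SameCycle p r → σ.SameCycle q t → σ.SameCycle p q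

theorem IsNoncrossingOn.mem_Ioo_of_sameCycle {σ : Perm α} {J : Set α}
    (hJ : σ.IsNoncrossingOn J) {p m r u : α} (hp : p ∈ J) (hm : m ∈ J) (hr : r ∈ J)
    (hu : u ∈ J) (hpm : p < m) (hmr : m < r) (hpr : σ.SameCycle p r)
    (hpm_cyc : ¬ σ.SameCycle p m) (hmu : σ.SameCycle m u) : u ∈ Set.Ioo p r := by
  have hpu_cyc : ¬ σ.SameCycle p u := fun h => hpm_cyc (h.trans hmu.symm)
  constructor
  · rcases lt_trichotomy u p with hup | rfl | hpu
    · exact absurd (hJ u p m r hu hp hm hr hup hpm hmr hmu.symm hpr).symm hpu_cyc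
    · exact absurd .rfl hpu_cyc
    · exact hpu
  · rcases lt_trichotomy u r with hur | rfl | hru
    · exact hur
    · exact absurd hpr hpu_cyc
    · exact absurd (hJ p m r u hp hm hr hu hpm hmr hru hpr hmu) hpm_cyc

end Equiv.Perm

theorem exists_lt_innermost {α : Type*} [LinearOrder α] [LocallyFiniteOrder α]
    (R : α → α → Prop) {p r : α} (hpr : p < r) (h : R p r) :
    ∃ a b, a < b ∧ R a b ∧ ∀ m u, a < m → m < u → u < b → ¬ R m u := by
  induction hn : (Finset.Ioo p r).card using Nat.strong_induction_on generalizing p r with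
  | _ n ih =>
    by_cases hinner : ∃ m u, p < m ∧ m < u ∧ u < r ∧ R m u
    · obtain ⟨m, u, hpm, hmu, hur, hR⟩ := hinner
      have hsub : Finset.Ioo m u ⊂ Finset.Ioo p r :=
        Finset.ssubset_iff_of_subset (Finset.Ioo_subset_Ioo hpm.le hur.le) |>.2
          ⟨m, Finset.mem_Ioo.2 ⟨hpm, hmu.trans hur⟩, by simp⟩
      exact ih _ (hn ▸ Finset.card_lt_card hsub) hmu hR rfl
    · push Not at hinner
      exact ⟨p, r, hpr, h, hinner⟩

theorem fixed_point_of_noncrossing_general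
    {I S : Type*} (ε : I → I → ℕ)
    (K : I → Set S)
    (hK : ∀ a b, a ≠ b → ε a b = 0 → (K a ∩ K b).Nonempty)
    (k : ℕ) (hk : 1 ≤ k) (ι : Fin k → I)
    (hι : ∀ j l : Fin k, j < l → ι j = ι l →
      ∃ m : Fin k, j < m ∧ m < l ∧ ι m ≠ ι j ∧ ε (ι j) (ι m) = 0)
    (σ : Equiv.Perm (Fin k)) (hσ : ∀ j, ι (σ j) = ι j)
    (hnc : ∀ s : S, ∀ p q r t : Fin k,
      s ∈ K (ι p) → s ∈ K (ι q) → s ∈ K (ι r) → s ∈ K (ι t) →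
      p < q → q < r → r < t →
      σ.SameCycle p r → σ.SameCycle q t → σ.SameCycle p q) :
    ∃ j, σ j = j := by
  by_contra! hfix
  obtain ⟨p₀, r₀, hlt₀, hcyc₀⟩ := Equiv.Perm.exists_lt_sameCycle_of_apply_ne (hfix ⟨0, hk⟩)
  obtain ⟨p, r, hpr, hcyc, hinner⟩ := exists_lt_innermost σ.SameCycle hlt₀ hcyc₀
  have hιpr : ι p = ι r := hcyc.apply_eq_of_invariant hσ
  obtain ⟨m, hpm, hmr, hιm, hε⟩ := hι p r hpr hιpr
  obtain ⟨s, hsp, hsm⟩ := hK _ _ hιm.symm hε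
  have hJ : σ.IsNoncrossingOn {j | s ∈ K (ι j)} := hnc s
  have hmσ : σ.SameCycle m (σ m) := Equiv.Perm.sameCycle_apply_right.2 .rfl
  obtain ⟨hpσ, hσr⟩ := hJ.mem_Ioo_of_sameCycle hsp hsm
    (show s ∈ K (ι r) from hιpr ▸ hsp)
    (show s ∈ K (ι (σ m)) by rwa [hσ])
    hpm hmr hcyc (fun h => hιm (h.apply_eq_of_invariant hσ).symm) hmσ
  rcases lt_or_gt_of_ne (hfix m).symm with h | h
  · exact hinner m (σ m) hpm h hσr hmσ
  · exact hinner (σ m) m hpσ h hmr hmσ.symm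

/-- **The fixed point proposition.**
Let `ε` be a symmetric `{0,1}`-matrix over `I` with vanishing diagonal, and `K : I → Set S`
be such that `K a ∩ K b ≠ ∅` whenever `a ≠ b` and `ε a b = 0`.  Suppose `k ≥ 1` and
`(ι 0, …, ι (k-1)) ∈ I_k^ε`, and let `σ` be a permutation of `Fin k` stabilizing the word
`ι` such that for every `s ∈ S` the orbit partition of `σ` restricted to
`J_s = {j | s ∈ K (ι j)}` is noncrossing (no `p < q < r < t` in `J_s` with `p, r` in one
orbit and `q, t` in a different orbit).  Then `σ` has a fixed point. -/
theorem fixed_point_of_noncrossing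
    {I S : Type*} (ε : I → I → ℕ)
    (hsym : ∀ a b, ε a b = ε b a)
    (hval : ∀ a b, ε a b = 0 ∨ ε a b = 1)
    (hdiag : ∀ a, ε a a = 0)
    (K : I → Set S)
    (hK : ∀ a b, a ≠ b → ε a b = 0 → (K a ∩ K b).Nonempty)
    (k : ℕ) (hk : 1 ≤ k) (ι : Fin k → I)
    (hι : ∀ j l : Fin k, j < l → ι j = ι l →
      ∃ m : Fin k, j < m ∧ m < l ∧ ι m ≠ ι j ∧ ε (ι j) (ι m) = 0)
    (σ : Equiv.Perm (Fin k)) (hσ : ∀ j, ι (σ j) = ι j)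
    (hnc : ∀ s : S, ∀ p q r t : Fin k,
      s ∈ K (ι p) → s ∈ K (ι q) → s ∈ K (ι r) → s ∈ K (ι t) →
      p < q → q < r → r < t →
      σ.SameCycle p r → σ.SameCycle q t → σ.SameCycle p q) :
    ∃ j, σ j = j :=
  fixed_point_of_noncrossing_general ε K hK k hk ι hι σ hσ hnc
end

section
/- Let k ≥ 1 and let Z be the full cycle of S_k sending each j ∈ ℤ/k to j+1. Let J be a nonempty subset of ℤ/k, and let Z_J ∈ S_k be the permutation fixing every element outside J and sending each element of J to the next element of J in the cyclic order of ℤ/k. Let τ ∈ S_k be any permutation fixing every element outside J (so τ permutes J). Then the number of orbits of τ^{-1}Z acting on ℤ/k equals the number of orbits of τ^{-1}Z_J that are contained in J; equivalently, #(τ^{-1}Z) = #(τ^{-1}Z_J) − (k − |J|), where #(π) denotes the number of orbits of π on ℤ/k (counting fixed points). -/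
/-- The number of orbits of a permutation `π` of `α` (the orbits of the subgroup generated
by `π` acting on `α`), counting fixed points. -/
noncomputable def numOrbits {α : Type*} (π : Equiv.Perm α) : ℕ :=
  Nat.card (MulAction.orbitRel.Quotient (Subgroup.zpowers π) α)

/-!
Write `σ = τ⁻¹ * Z` and `ρ = τ⁻¹ * Z_J`. Since `Z_J` is the first-return map of `Z` to `J` and
`τ⁻¹` moves only points of `J`, a `σ`-trajectory that leaves `J` follows `Z` until it re-enters
`J`; hence `ρ` is the first-return map of `σ` to `J`, extended by the identity. Every `σ`-orbit
meets `J`, and two points of `J` share a `σ`-orbit iff they share a `ρ`-orbit, so the `σ`-orbits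
correspond to the `ρ`-orbits inside `J`; the other `ρ`-orbits are the `k - |J|` fixed points
outside `J`.
-/

namespace Equiv.Perm

variable {α β : Type*}

theorem numOrbits_eq_card_quotient_sameCycle (σ : Perm α) :
    numOrbits σ = Nat.card (Quotient (SameCycle.setoid σ)) := by
  have : MulAction.orbitRel (Subgroup.zpowers σ) α = SameCycle.setoid σ := by
    ext x y
    rw [MulAction.orbitRel_apply, MulAction.mem_orbit_iff]
    constructor
    · rintro ⟨⟨_, n, rfl⟩, h⟩
      exact SameCycle.symm ⟨n, h⟩
    · rintro ⟨n, h⟩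
      exact ⟨⟨σ ^ (-n), -n, rfl⟩, by simp [← h]⟩
  rw [numOrbits, MulAction.orbitRel.Quotient, this]

theorem numOrbits_eq_of_sameCycle_iff {σ : Perm α} {π : Perm β} (f : β → α)
    (hf : ∀ x y, σ.SameCycle (f x) (f y) ↔ π.SameCycle x y)
    (hmeet : ∀ a, ∃ b, σ.SameCycle a (f b)) :
    numOrbits π = numOrbits σ := by
  rw [numOrbits_eq_card_quotient_sameCycle, numOrbits_eq_card_quotient_sameCycle]
  refine Nat.card_eq_of_bijective
    (Quotient.map' f fun x y h => (hf x y).2 h) ⟨fun p q h => ?_, fun p => ?_⟩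
  · induction p using Quotient.inductionOn'
    induction q using Quotient.inductionOn'
    exact Quotient.sound ((hf _ _).1 (Quotient.exact h))
  · induction p using Quotient.inductionOn' with | h a =>
    obtain ⟨b, hb⟩ := hmeet a
    exact ⟨Quotient.mk'' b, Quotient.sound hb.symm⟩

theorem numOrbits_eq_numOrbits_subtypePerm_add [Finite α] {ρ : Perm α} {S : Set α}
    (hS : ∀ x, ρ x ∈ S ↔ x ∈ S) (hfix : ∀ x ∉ S, ρ x = x) :
    numOrbits ρ = numOrbits (ρ.subtypePerm hS) + Nat.card ↥Sᶜ := by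
  rw [numOrbits_eq_card_quotient_sameCycle, numOrbits_eq_card_quotient_sameCycle,
    ← Nat.card_sum]
  let F : Quotient (SameCycle.setoid (ρ.subtypePerm hS)) ⊕ ↥Sᶜ → Quotient (SameCycle.setoid ρ) :=
    Sum.elim (Quotient.map' Subtype.val fun x y => sameCycle_subtypePerm.1)
      fun x => Quotient.mk'' x.1
  refine (Nat.card_eq_of_bijective F ⟨fun p q h => ?_, fun p => ?_⟩).symm
  · have hsingleton : ∀ {a y}, y ∉ S → ρ.SameCycle a y → a = y :=
      fun hy h => h.eq_of_right (hfix _ hy)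
    rcases p with p | ⟨x, hx⟩ <;> rcases q with q | ⟨y, hy⟩
    · induction p using Quotient.inductionOn'
      induction q using Quotient.inductionOn'
      exact congrArg Sum.inl (Quotient.sound (sameCycle_subtypePerm.2 (Quotient.exact h)))
    · induction p using Quotient.inductionOn' with | h a =>
      exact absurd (hsingleton hy (Quotient.exact h) ▸ a.2) hy
    · induction q using Quotient.inductionOn' with | h b =>
      exact absurd (hsingleton hx (Quotient.exact h).symm ▸ b.2) hx
    · exact congrArg Sum.inr (Subtype.ext (hsingleton hy (Quotient.exact h)))
  · induction p using Quotient.inductionOn' with | h a =>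
    by_cases ha : a ∈ S
    · exact ⟨Sum.inl (Quotient.mk'' ⟨a, ha⟩), rfl⟩
    · exact ⟨Sum.inr ⟨a, ha⟩, rfl⟩

structure IsFirstReturnMap (σ : Perm α) (S : Set α) (ρ : Perm α) : Prop where
  apply_of_notMem : ∀ x ∉ S, ρ x = x
  exists_pow : ∀ x ∈ S, ∃ n, 0 < n ∧ (σ ^ n) x = ρ x ∧ ρ x ∈ S ∧
    ∀ m, 0 < m → m < n → (σ ^ m) x ∉ S

namespace IsFirstReturnMap

variable {σ ρ : Perm α} {S : Set α}

theorem apply_mem_iff (hρ : IsFirstReturnMap σ S ρ) (x : α) : ρ x ∈ S ↔ x ∈ S := by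
  by_cases hx : x ∈ S
  · obtain ⟨_, _, _, hρx, _⟩ := hρ.exists_pow x hx
    exact iff_of_true hρx hx
  · rw [hρ.apply_of_notMem x hx]

theorem sameCycle_apply (hρ : IsFirstReturnMap σ S ρ) {x : α} (hx : x ∈ S) :
    σ.SameCycle x (ρ x) := by
  obtain ⟨n, -, hn, -⟩ := hρ.exists_pow x hx
  exact ⟨n, by rw [zpow_natCast, hn]⟩

theorem sameCycle_pow_apply (hρ : IsFirstReturnMap σ S ρ) (n : ℕ) {x : α} (hx : x ∈ S) :
    σ.SameCycle x ((ρ ^ n) x) := by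
  induction n generalizing x with
  | zero => exact SameCycle.rfl
  | succ n ih =>
    rw [pow_succ, mul_apply]
    exact (hρ.sameCycle_apply hx).trans (ih ((hρ.apply_mem_iff x).2 hx))

theorem sameCycle_pow_apply_of_mem (hρ : IsFirstReturnMap σ S ρ) (n : ℕ) {x : α} (hx : x ∈ S)
    (hn : (σ ^ n) x ∈ S) : ρ.SameCycle x ((σ ^ n) x) := by
  induction n using Nat.strong_induction_on generalizing x with | _ n ih =>
  obtain ⟨d, hd, hσd, hρx, hmin⟩ := hρ.exists_pow x hx
  rcases Nat.eq_zero_or_pos n with rfl | hn0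
  · exact SameCycle.rfl
  by_cases hnd : n < d
  · exact absurd hn (hmin n hn0 hnd)
  have hsplit : (σ ^ n) x = (σ ^ (n - d)) (ρ x) := by
    rw [← hσd, ← mul_apply, ← pow_add, Nat.sub_add_cancel (not_lt.1 hnd)]
  rw [hsplit] at hn ⊢
  exact sameCycle_apply_left.1 (ih (n - d) (by omega) hρx hn)

theorem sameCycle_iff [Finite α] (hρ : IsFirstReturnMap σ S ρ) {x y : α} (hx : x ∈ S)
    (hy : y ∈ S) : σ.SameCycle x y ↔ ρ.SameCycle x y := by
  constructor
  · intro h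
    obtain ⟨n, rfl⟩ := h.exists_nat_pow_eq
    exact hρ.sameCycle_pow_apply_of_mem n hx hy
  · intro h
    obtain ⟨n, rfl⟩ := h.exists_nat_pow_eq
    exact hρ.sameCycle_pow_apply n hx

theorem numOrbits_add_card_compl [Finite α] (hρ : IsFirstReturnMap σ S ρ)
    (hmeet : ∀ y, ∃ n : ℕ, (σ ^ n) y ∈ S) :
    numOrbits σ + Nat.card ↥Sᶜ = numOrbits ρ := by
  rw [numOrbits_eq_numOrbits_subtypePerm_add hρ.apply_mem_iff hρ.apply_of_notMem,
    numOrbits_eq_of_sameCycle_iff (σ := σ) Subtype.val]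
  · exact fun x y => (hρ.sameCycle_iff x.2 y.2).trans sameCycle_subtypePerm.symm
  · intro a
    obtain ⟨n, hn⟩ := hmeet a
    exact ⟨⟨_, hn⟩, sameCycle_pow_right.2 SameCycle.rfl⟩

end IsFirstReturnMap

section InvMul

variable {τ Z : Perm α} {S : Set α}

theorem inv_apply_mem_iff_of_forall_notMem (hτ : ∀ x ∉ S, τ x = x) (x : α) :
    τ⁻¹ x ∈ S ↔ x ∈ S := by
  by_cases hx : x ∈ S
  · refine iff_of_true ?_ hx
    by_contra h
    have hfix : x = τ⁻¹ x := by simpa using hτ _ h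
    exact h (hfix ▸ hx)
  · rw [inv_eq_iff_eq.2 (hτ x hx).symm]

theorem inv_mul_pow_apply_of_forall_notMem (hτ : ∀ x ∉ S, τ x = x) {x : α} {n : ℕ}
    (hn : 0 < n) (hx : ∀ m, 0 < m → m < n → (Z ^ m) x ∉ S) :
    ((τ⁻¹ * Z) ^ n) x = τ⁻¹ ((Z ^ n) x) := by
  induction n, hn using Nat.le_induction with
  | base => rw [pow_one, pow_one, mul_apply]
  | succ n hn ih =>
    have hZn : (Z ^ n) x ∉ S := hx n hn (Nat.lt_succ_self n)
    rw [pow_succ', mul_apply, ih fun m hm hmn => hx m hm (by omega),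
      inv_eq_iff_eq.2 (hτ _ hZn).symm, mul_apply, ← mul_apply Z, ← pow_succ']

theorem IsFirstReturnMap.inv_mul {ρ : Perm α} (hρ : IsFirstReturnMap Z S ρ)
    (hτ : ∀ x ∉ S, τ x = x) : IsFirstReturnMap (τ⁻¹ * Z) S (τ⁻¹ * ρ) where
  apply_of_notMem x hx := by
    rw [mul_apply, hρ.apply_of_notMem x hx, inv_eq_iff_eq.2 (hτ x hx).symm]
  exists_pow x hx := by
    obtain ⟨n, hn, hZn, hρx, hmin⟩ := hρ.exists_pow x hx
    refine ⟨n, hn, ?_, (inv_apply_mem_iff_of_forall_notMem hτ _).2 hρx, fun m hm hmn => ?_⟩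
    · rw [inv_mul_pow_apply_of_forall_notMem hτ hn hmin, hZn, mul_apply]
    · rw [inv_mul_pow_apply_of_forall_notMem hτ hm fun l hl hlm => hmin l hl (hlm.trans hmn),
        inv_apply_mem_iff_of_forall_notMem hτ]
      exact hmin m hm hmn

theorem exists_inv_mul_pow_apply_mem (hτ : ∀ x ∉ S, τ x = x)
    (hZ : ∀ y, ∃ n : ℕ, (Z ^ n) y ∈ S) (y : α) : ∃ n : ℕ, ((τ⁻¹ * Z) ^ n) y ∈ S := by
  classical
  rcases Nat.eq_zero_or_pos (Nat.find (hZ y)) with h0 | hpos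
  · exact ⟨0, by simpa [h0] using Nat.find_spec (hZ y)⟩
  · refine ⟨Nat.find (hZ y), ?_⟩
    rw [inv_mul_pow_apply_of_forall_notMem hτ hpos fun m _ hm => Nat.find_min (hZ y) hm,
      inv_apply_mem_iff_of_forall_notMem hτ]
    exact Nat.find_spec (hZ y)

end InvMul

end Equiv.Perm

/-- Let `Z` be the full cycle `j ↦ j + 1` of `ℤ/k`, `J` a nonempty subset of `ℤ/k`, and
`Z_J` the permutation fixing everything outside `J` and sending each `x ∈ J` to the next
element of `J` in cyclic order (i.e. `x + d` for the least `d > 0` with `x + d ∈ J`).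
For any permutation `τ` fixing every element outside `J`, the number of orbits of `τ⁻¹ * Z`
on `ℤ/k` equals the number of orbits of `τ⁻¹ * Z_J` contained in `J`; equivalently,
`#(τ⁻¹Z) = #(τ⁻¹Z_J) − (k − |J|)`. -/
theorem numOrbits_full_cycle_restrict (k : ℕ) [NeZero k]
    (Z : Equiv.Perm (ZMod k)) (hZ : ∀ x, Z x = x + 1)
    (J : Finset (ZMod k)) (hJ : J.Nonempty)
    (ZJ : Equiv.Perm (ZMod k))
    (hZJ_off : ∀ x ∉ J, ZJ x = x)
    (hZJ_on : ∀ x ∈ J, ∃ d : ℕ, 0 < d ∧ ZJ x = x + (d : ZMod k) ∧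
      (x + (d : ZMod k)) ∈ J ∧ ∀ e : ℕ, 0 < e → e < d → x + (e : ZMod k) ∉ J)
    (τ : Equiv.Perm (ZMod k)) (hτ : ∀ x ∉ J, τ x = x) :
    numOrbits (τ⁻¹ * Z) + (k - J.card) = numOrbits (τ⁻¹ * ZJ) := by
  have hZpow (x : ZMod k) (n : ℕ) : (Z ^ n) x = x + n := by
    induction n with
    | zero => simp
    | succ n ih => rw [pow_succ', Equiv.Perm.mul_apply, ih, hZ, Nat.cast_succ, add_assoc]
  have hZJ : Z.IsFirstReturnMap (J : Set (ZMod k)) ZJ := by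
    refine ⟨hZJ_off, fun x hx => ?_⟩
    obtain ⟨d, hd, hZJx, hmem, hmin⟩ := hZJ_on x hx
    exact ⟨d, hd, by rw [hZpow, hZJx], hZJx ▸ hmem, fun m hm hmd => by
      rw [hZpow]; exact hmin m hm hmd⟩
  have hmeet (y : ZMod k) : ∃ n : ℕ, (Z ^ n) y ∈ (J : Set (ZMod k)) := by
    obtain ⟨z, hz⟩ := hJ
    exact ⟨(z - y).val, by rw [hZpow, ZMod.natCast_zmod_val, add_sub_cancel]; exact hz⟩
  have hcard : Nat.card ↥(J : Set (ZMod k))ᶜ = k - J.card := by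
    rw [Nat.card_coe_set_eq, Set.ncard_compl, Set.ncard_coe_finset, Nat.card_zmod]
  rw [← hcard]
  exact (hZJ.inv_mul hτ).numOrbits_add_card_compl (Equiv.Perm.exists_inv_mul_pow_apply_mem hτ hmeet)
end

section
/- Let k ≥ 1, let Z ∈ S_k be the full cycle j ↦ j+1 (mod k) on {0, 1, …, k−1}, and for a permutation π of {0, …, k−1} write |π| := k − #(π), where #(π) is the number of orbits of π (counting fixed points). If σ, τ ∈ S_k satisfy |σ| + |σ^{-1}τ| + |τ^{-1}Z| = |Z| = k − 1, then the orbit partition of σ and the orbit partition of τ are both noncrossing partitions of {0, 1, …, k−1}; moreover the inequality |Z| ≤ |σ| + |σ^{-1}τ| + |τ^{-1}Z| holds for all σ, τ ∈ S_k. -/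
/-- The Cayley length `|π| := k − #(π)` of a permutation of `Fin k`. -/
noncomputable def permLength {k : ℕ} (π : Equiv.Perm (Fin k)) : ℕ := k - numOrbits π

/-- The orbit partition of a permutation of `Fin k` is noncrossing: there are no
`p < q < r < t` with `p, r` in one orbit and `q, t` in a different orbit. -/
def IsNoncrossing {k : ℕ} (π : Equiv.Perm (Fin k)) : Prop :=
  ∀ p q r t : Fin k, p < q → q < r → r < t →
    π.SameCycle p r → π.SameCycle q t → π.SameCycle p q

theorem Nat.card_eq_card_add_one_of_surjective {X Y : Type*} [Finite X] {φ : X → Y}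
    (hφ : φ.Surjective) {x₀ x₁ : X} (hne : x₀ ≠ x₁) (heq : φ x₀ = φ x₁)
    (hinj : Set.InjOn φ {x₁}ᶜ) : Nat.card X = Nat.card Y + 1 := by
  classical
  rw [← Nat.card_congr (Equiv.optionSubtypeNe x₁), Finite.card_option]
  refine congrArg (· + 1) (Nat.card_eq_of_bijective (fun x => φ x) ⟨fun x y h => ?_, fun y => ?_⟩)
  · exact Subtype.ext (hinj x.2 y.2 h)
  · obtain ⟨x, rfl⟩ := hφ y
    by_cases hx : x = x₁
    · exact ⟨⟨x₀, hne⟩, hx ▸ heq⟩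
    · exact ⟨⟨x, hx⟩, rfl⟩

namespace Equiv.Perm

variable {α : Type*} {f g : Perm α} {a b c d x y : α}

theorem orbitRel_zpowers_iff_sameCycle :
    MulAction.orbitRel (Subgroup.zpowers f) α x y ↔ f.SameCycle x y := by
  rw [MulAction.orbitRel_apply, MulAction.mem_orbit_iff, Subgroup.exists_zpowers, sameCycle_comm]
  rfl

theorem orbitRel_zpowers_mk_eq_mk_iff :
    (Quotient.mk'' x : MulAction.orbitRel.Quotient (Subgroup.zpowers f) α) = Quotient.mk'' y ↔
      f.SameCycle x y :=
  Quotient.eq''.trans orbitRel_zpowers_iff_sameCycle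

theorem numOrbits_one : numOrbits (1 : Perm α) = Nat.card α :=
  (Nat.card_eq_of_bijective _ ⟨fun _ _ h => sameCycle_one.1 (orbitRel_zpowers_mk_eq_mk_iff.1 h),
    Quotient.mk''_surjective⟩).symm

theorem numOrbits_eq_one [Nonempty α] (h : ∀ x y, f.SameCycle x y) : numOrbits f = 1 := by
  refine Nat.card_eq_one_iff_unique.2 ⟨⟨fun q₁ q₂ => ?_⟩, ⟨Quotient.mk'' (Classical.arbitrary α)⟩⟩
  induction q₁, q₂ using Quotient.inductionOn₂' with
  | h x y => exact orbitRel_zpowers_mk_eq_mk_iff.2 (h x y)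

theorem pow_apply_eq_pow_apply_of_forall_lt {n : ℕ}
    (h : ∀ i < n, g ((f ^ i) x) = f ((f ^ i) x)) : (g ^ n) x = (f ^ n) x := by
  induction n with
  | zero => rfl
  | succ n ih =>
    rw [pow_succ', pow_succ', mul_apply, mul_apply, ih fun i hi => h i (by omega),
      h n n.lt_succ_self]

section Finite

variable [Finite α]

theorem SameCycle.mem_of_mapsTo {s : Set α} (hs : Set.MapsTo f s s) (h : f.SameCycle x y)
    (hx : x ∈ s) : y ∈ s := by
  obtain ⟨n, rfl⟩ := h.exists_nat_pow_eq
  exact hs.perm_pow n hx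

theorem SameCycle.of_forall_sameCycle_apply (hfg : ∀ z, f.SameCycle z (g z))
    (h : g.SameCycle x y) : f.SameCycle x y :=
  h.mem_of_mapsTo (s := {z | f.SameCycle x z}) (fun z hz => hz.trans (hfg z)) (.refl f x)

theorem numOrbits_le_card (f : Perm α) : numOrbits f ≤ Nat.card α :=
  Nat.card_le_card_of_surjective _ Quotient.mk''_surjective

variable [DecidableEq α]

theorem sameCycle_swap_mul_iff (ha : ¬f.SameCycle x a) (hb : ¬f.SameCycle x b) :
    (swap a b * f).SameCycle x y ↔ f.SameCycle x y := by
  have hagree : ∀ z, f.SameCycle x z → (swap a b * f) z = f z := fun z hz => by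
    have hfz : f.SameCycle x (f z) := sameCycle_apply_right.2 hz
    exact swap_apply_of_ne_of_ne (fun h => ha (h ▸ hfz)) (fun h => hb (h ▸ hfz))
  have hto : ∀ {y}, (swap a b * f).SameCycle x y → f.SameCycle x y := fun h =>
    h.mem_of_mapsTo (s := {z | f.SameCycle x z})
      (fun z hz => by simpa only [Set.mem_ofPred_eq, hagree z hz] using sameCycle_apply_right.2 hz)
      (.refl f x)
  refine ⟨hto, fun h => h.mem_of_mapsTo (s := {z | (swap a b * f).SameCycle x z}) ?_ (.refl _ x)⟩
  intro z hz
  rw [Set.mem_ofPred_eq, ← hagree z (hto hz)]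
  exact sameCycle_apply_right.2 hz

theorem SameCycle.of_swap_mul (hab : f.SameCycle a b) (h : (swap a b * f).SameCycle x y) :
    f.SameCycle x y := by
  refine h.of_forall_sameCycle_apply fun z => ?_
  have hz : f.SameCycle z (f z) := sameCycle_apply_right.2 (.refl f z)
  rw [coe_mul, Function.comp_apply, swap_apply_def]
  split_ifs with h₁ h₂
  · exact (h₁ ▸ hz).trans hab
  · exact (h₂ ▸ hz).trans hab.symm
  · exact hz

theorem SameCycle.swap_mul (hx : ¬(swap a b * f).SameCycle x b)
    (hy : ¬(swap a b * f).SameCycle y b) (h : f.SameCycle x y) : (swap a b * f).SameCycle x y := by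
  have hloc : ∀ {z}, ¬(swap a b * f).SameCycle z a → ¬(swap a b * f).SameCycle z b →
      ∀ {w}, f.SameCycle z w → (swap a b * f).SameCycle z w := fun hza hzb w hzw => by
    rwa [← sameCycle_swap_mul_iff hza hzb, swap_mul_self_mul]
  by_cases hxa : (swap a b * f).SameCycle x a
  · by_cases hya : (swap a b * f).SameCycle y a
    · exact hxa.trans hya.symm
    · exact (hloc hya hy h.symm).symm
  · exact hloc hxa hx h

theorem sameCycle_swap_mul_of_not_sameCycle (hab : ¬f.SameCycle a b) :
    (swap a b * f).SameCycle a b := by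
  have hex : ∃ n : ℕ, (f ^ n) a = f.symm a :=
    (sameCycle_symm_apply_right.2 (.refl f a)).exists_nat_pow_eq
  -- `swap a b * f` follows the `f`-cycle of `a` up to `f.symm a`, and then jumps to `b`.
  have hpath : ((swap a b * f) ^ Nat.find hex) a = f.symm a := by
    rw [pow_apply_eq_pow_apply_of_forall_lt fun i hi => ?_, Nat.find_spec hex]
    have hfi : f.SameCycle a (f ((f ^ i) a)) :=
      sameCycle_apply_right.2 (sameCycle_pow_right.2 (.refl f a))
    exact swap_apply_of_ne_of_ne (fun h => Nat.find_min hex hi (f.eq_symm_apply.2 h))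
      (fun h => hab (h ▸ hfi))
  have hb : (swap a b * f) (f.symm a) = b := by simp
  have h := sameCycle_apply_right.2 (hpath ▸ sameCycle_pow_right.2 (.refl (swap a b * f) a))
  rwa [hb] at h

theorem not_sameCycle_swap_mul_of_sameCycle (hne : a ≠ b) (hab : f.SameCycle a b) :
    ¬(swap a b * f).SameCycle a b := by
  have hex : ∃ n : ℕ, (f ^ n) a = b := hab.exists_nat_pow_eq
  set n := Nat.find hex
  have hn : 0 < n := (Nat.find_pos hex).2 (by simpa using hne)
  -- The `f`-path from `a` reaches `b` before it returns to `a`, and `swap a b * f` closes it up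
  -- into a cycle through `a` that misses `b`.
  have hret : ∀ j, 0 < j → j < n → (f ^ j) a ≠ a := fun j hj hjn hja =>
    Nat.find_min hex (show n - j < n by omega) <| calc
      (f ^ (n - j)) a = (f ^ (n - j)) ((f ^ j) a) := by rw [hja]
      _ = b := by rw [← mul_apply, ← pow_add, Nat.sub_add_cancel hjn.le, Nat.find_spec hex]
  intro h
  refine h.mem_of_mapsTo (s := {y | ∃ i < n, (f ^ i) a = y}) ?_ ⟨0, hn, rfl⟩ |>.elim
    fun i ⟨hi, hib⟩ => Nat.find_min hex hi hib
  rintro _ ⟨i, hi, rfl⟩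
  rw [mul_apply, ← mul_apply f, ← pow_succ']
  rcases (show i + 1 ≤ n from hi).eq_or_lt with he | hlt
  · exact ⟨0, hn, by rw [he, Nat.find_spec hex, swap_apply_right, pow_zero, one_apply]⟩
  · exact ⟨i + 1, hlt, (swap_apply_of_ne_of_ne (hret _ i.succ_pos hlt) (Nat.find_min hex hlt)).symm⟩

theorem numOrbits_swap_mul_of_sameCycle (hne : a ≠ b) (hab : f.SameCycle a b) :
    numOrbits (swap a b * f) = numOrbits f + 1 := by
  let φ : MulAction.orbitRel.Quotient (Subgroup.zpowers (swap a b * f)) α →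
      MulAction.orbitRel.Quotient (Subgroup.zpowers f) α :=
    Quotient.map' id fun _ _ h =>
      orbitRel_zpowers_iff_sameCycle.2 (hab.of_swap_mul (orbitRel_zpowers_iff_sameCycle.1 h))
  refine Nat.card_eq_card_add_one_of_surjective (φ := φ) (x₀ := Quotient.mk'' a)
    (x₁ := Quotient.mk'' b) (Quotient.ind' fun x => ⟨Quotient.mk'' x, rfl⟩) ?_ ?_ ?_
  · exact fun h => not_sameCycle_swap_mul_of_sameCycle hne hab (orbitRel_zpowers_mk_eq_mk_iff.1 h)
  · exact orbitRel_zpowers_mk_eq_mk_iff.2 hab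
  · rintro ⟨x⟩ hx ⟨y⟩ hy h
    exact orbitRel_zpowers_mk_eq_mk_iff.2 (SameCycle.swap_mul
      (mt orbitRel_zpowers_mk_eq_mk_iff.2 hx) (mt orbitRel_zpowers_mk_eq_mk_iff.2 hy)
      (orbitRel_zpowers_mk_eq_mk_iff.1 h))

theorem numOrbits_swap_mul_of_not_sameCycle (hab : ¬f.SameCycle a b) :
    numOrbits (swap a b * f) + 1 = numOrbits f := by
  have hne : a ≠ b := fun h => hab (h ▸ .refl f a)
  simpa only [swap_mul_self_mul] using
    (numOrbits_swap_mul_of_sameCycle hne (sameCycle_swap_mul_of_not_sameCycle hab)).symm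

theorem numOrbits_swap_mul_le (a b : α) (f : Perm α) :
    numOrbits (swap a b * f) ≤ numOrbits f + 1 := by
  rcases eq_or_ne a b with rfl | hne
  · rw [swap_self, ← one_def, one_mul]
    omega
  by_cases hab : f.SameCycle a b
  · exact (numOrbits_swap_mul_of_sameCycle hne hab).le
  · have := numOrbits_swap_mul_of_not_sameCycle hab
    omega

theorem numOrbits_add_numOrbits_le (f g : Perm α) :
    numOrbits f + numOrbits g ≤ Nat.card α + numOrbits (f * g) := by
  induction hn : Nat.card α - numOrbits f using Nat.strong_induction_on generalizing f with
  | _ n ih =>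
    by_cases hf : f = 1
    · simp [hf, numOrbits_one]
    obtain ⟨x, hx⟩ : ∃ x, f x ≠ x := by
      by_contra! h
      exact hf (Equiv.ext h)
    -- `f = swap x (f x) * f'` where `f'` has one cycle more than `f`
    have hsplit :=
      numOrbits_swap_mul_of_sameCycle (Ne.symm hx) (sameCycle_apply_right.2 (.refl f x))
    have hle := numOrbits_le_card (swap x (f x) * f)
    have hind := ih _ (by omega) (swap x (f x) * f) rfl
    have hstep := numOrbits_swap_mul_le x (f x) (f * g)
    rw [mul_assoc] at hind
    omega

theorem numOrbits_add_numOrbits_add_numOrbits_le (σ τ π : Perm α) :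
    numOrbits σ + numOrbits (σ⁻¹ * τ) + numOrbits (τ⁻¹ * π) ≤ 2 * Nat.card α + numOrbits π := by
  have h₁ := numOrbits_add_numOrbits_le σ (σ⁻¹ * τ)
  have h₂ := numOrbits_add_numOrbits_le τ (τ⁻¹ * π)
  rw [mul_inv_cancel_left] at h₁ h₂
  omega

theorem numOrbits_swap_mul_swap (hab : a ≠ b) (hcd : c ≠ d) (hac : a ≠ c) (had : a ≠ d) :
    numOrbits (swap a b * swap c d) + 2 = Nat.card α := by
  have h₁ : numOrbits (swap c d) + 1 = Nat.card α := by
    simpa [numOrbits_one] using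
      numOrbits_swap_mul_of_not_sameCycle (f := 1) (sameCycle_one.not.2 hcd)
  have h₂ := numOrbits_swap_mul_of_not_sameCycle (f := swap c d) fun h =>
    hab (h.eq_of_left (swap_apply_of_ne_of_ne hac had))
  omega

end Finite

/-- `σ` lies on a geodesic from `1` to `π` in the Cayley graph of transpositions, i.e.
`|σ| + |σ⁻¹π| = |π|`, written with orbit counts to avoid truncated subtraction. -/
def AbsLE (σ π : Perm α) : Prop :=
  numOrbits σ + numOrbits (σ⁻¹ * π) = Nat.card α + numOrbits π

section AbsLE

variable [Finite α] [DecidableEq α]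

theorem AbsLE.trans {ρ σ π : Perm α} (h₁ : AbsLE ρ σ) (h₂ : AbsLE σ π) : AbsLE ρ π := by
  have t₁ := numOrbits_add_numOrbits_le (ρ⁻¹ * σ) (σ⁻¹ * π)
  have t₂ := numOrbits_add_numOrbits_le ρ (ρ⁻¹ * π)
  rw [mul_assoc, mul_inv_cancel_left] at t₁
  rw [mul_inv_cancel_left] at t₂
  unfold AbsLE at *
  omega

theorem absLE_and_absLE_of_numOrbits_add_numOrbits_add_numOrbits_eq {σ τ π : Perm α}
    (h : numOrbits σ + numOrbits (σ⁻¹ * τ) + numOrbits (τ⁻¹ * π) = 2 * Nat.card α + numOrbits π) :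
    AbsLE σ τ ∧ AbsLE τ π := by
  have h₁ := numOrbits_add_numOrbits_le σ (σ⁻¹ * τ)
  have h₂ := numOrbits_add_numOrbits_le τ (τ⁻¹ * π)
  rw [mul_inv_cancel_left] at h₁ h₂
  unfold AbsLE
  omega

theorem absLE_swap_mul_swap (hab : a ≠ b) (hcd : c ≠ d) (h₁ : f.SameCycle a b)
    (h₂ : f.SameCycle c d) (hac : ¬f.SameCycle a c) : AbsLE (swap a b * swap c d) f := by
  have hcd' : (swap a b * f).SameCycle c d :=
    (sameCycle_swap_mul_iff (fun h => hac h.symm) fun h => hac (h₁.trans h.symm)).2 h₂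
  have e₁ := numOrbits_swap_mul_of_sameCycle hab h₁
  have e₂ := numOrbits_swap_mul_of_sameCycle hcd hcd'
  have e₃ := numOrbits_swap_mul_swap hab hcd (fun h => hac (h ▸ .refl f a))
    (fun h => hac (h ▸ h₂.symm))
  unfold AbsLE
  rw [mul_inv_rev, swap_inv, swap_inv, mul_assoc]
  omega

end AbsLE

end Equiv.Perm

open Equiv Equiv.Perm

section FullCycle

variable {k : ℕ} [NeZero k] {Z : Perm (Fin k)}

open Fin.NatCast in
theorem sameCycle_of_forall_apply_eq_add_one (hZ : ∀ j, Z j = j + 1) (x y : Fin k) :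
    Z.SameCycle x y := by
  have h : ∀ n : ℕ, Z.SameCycle x (x + n) := fun n => by
    induction n with
    | zero => simpa using SameCycle.refl Z x
    | succ n ih => rw [Nat.cast_succ, ← add_assoc, ← hZ]; exact sameCycle_apply_right.2 ih
  simpa using h (y - x).val

theorem not_sameCycle_swap_mul_of_le_of_lt_of_le (hZ : ∀ j, Z j = j + 1) {p q r t : Fin k}
    (hpq : p ≤ q) (hqr : q < r) (hrt : r ≤ t) : ¬(swap p r * Z).SameCycle q t := by
  -- `swap p r * Z` cycles through the interval `[p, r)` without leaving it
  refine fun h => (h.mem_of_mapsTo ?_ ⟨hpq, hqr⟩ : t ∈ Set.Ico p r).2.not_ge hrt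
  rintro x ⟨hpx, hxr⟩
  have hx : (x + 1).val = x.val + 1 := Fin.val_add_one_of_lt' (by omega)
  rw [mul_apply, hZ]
  rcases eq_or_ne (x + 1) r with h | h
  · rw [h, swap_apply_right]
    exact ⟨le_rfl, hpx.trans_lt hxr⟩
  · have hp : x + 1 ≠ p := fun h => by have := congrArg Fin.val h; omega
    have hr : (x + 1).val ≠ r.val := Fin.val_ne_of_ne h
    rw [swap_apply_of_ne_of_ne hp h]
    exact ⟨Fin.le_def.2 (by omega), Fin.lt_def.2 (by omega)⟩

theorem isNoncrossing_of_absLE (hZ : ∀ j, Z j = j + 1) {σ : Perm (Fin k)} (hσ : AbsLE σ Z) :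
    IsNoncrossing σ := by
  intro p q r t hpq hqr hrt hpr hqt
  by_contra hpq'
  have hZ₁ := numOrbits_eq_one (sameCycle_of_forall_apply_eq_add_one hZ)
  have hρ := (absLE_swap_mul_swap (hpq.trans hqr).ne (hqr.trans hrt).ne hpr hqt hpq').trans hσ
  have h₁ := numOrbits_swap_mul_swap (hpq.trans hqr).ne (hqr.trans hrt).ne hpq.ne
    (hpq.trans (hqr.trans hrt)).ne
  have h₂ := numOrbits_swap_mul_of_sameCycle (hpq.trans hqr).ne
    (sameCycle_of_forall_apply_eq_add_one hZ p r)
  have h₃ := numOrbits_swap_mul_of_not_sameCycle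
    (not_sameCycle_swap_mul_of_le_of_lt_of_le hZ hpq.le hqr hrt.le)
  unfold AbsLE at hρ
  rw [mul_inv_rev, swap_inv, swap_inv, mul_assoc] at hρ
  omega

end FullCycle

/-- **Geodesic triples for the full cycle are noncrossing.**
Let `k ≥ 1` and let `Z` be the full cycle `j ↦ j + 1 (mod k)` of `Fin k`.  Then
`|Z| = k − 1`, the inequality `|Z| ≤ |σ| + |σ⁻¹τ| + |τ⁻¹Z|` always holds, and whenever
`|σ| + |σ⁻¹τ| + |τ⁻¹Z| = k − 1`, the orbit partitions of both `σ` and `τ`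
are noncrossing partitions of `Fin k`. -/
theorem noncrossing_of_geodesic (k : ℕ) [NeZero k]
    (Z : Equiv.Perm (Fin k)) (hZ : ∀ j, Z j = j + 1) :
    permLength Z = k - 1 ∧
    (∀ σ τ : Equiv.Perm (Fin k),
      permLength Z ≤ permLength σ + permLength (σ⁻¹ * τ) + permLength (τ⁻¹ * Z)) ∧
    (∀ σ τ : Equiv.Perm (Fin k),
      permLength σ + permLength (σ⁻¹ * τ) + permLength (τ⁻¹ * Z) = k - 1 →
      IsNoncrossing σ ∧ IsNoncrossing τ) := by
  have hZ₁ : numOrbits Z = 1 := numOrbits_eq_one (sameCycle_of_forall_apply_eq_add_one hZ)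
  have hk := NeZero.pos k
  have hcard := Nat.card_fin k
  have hbounds (σ τ : Perm (Fin k)) :
      numOrbits σ ≤ Nat.card (Fin k) ∧ numOrbits (σ⁻¹ * τ) ≤ Nat.card (Fin k) ∧
        numOrbits (τ⁻¹ * Z) ≤ Nat.card (Fin k) ∧
        numOrbits σ + numOrbits (σ⁻¹ * τ) + numOrbits (τ⁻¹ * Z) ≤
          2 * Nat.card (Fin k) + numOrbits Z :=
    ⟨numOrbits_le_card σ, numOrbits_le_card _, numOrbits_le_card _,
      numOrbits_add_numOrbits_add_numOrbits_le σ τ Z⟩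
  refine ⟨by rw [permLength, hZ₁], fun σ τ => ?_, fun σ τ h => ?_⟩
  · have := hbounds σ τ
    unfold permLength
    omega
  · have := hbounds σ τ
    unfold permLength at h
    obtain ⟨hστ, hτZ⟩ := absLE_and_absLE_of_numOrbits_add_numOrbits_add_numOrbits_eq
      (σ := σ) (τ := τ) (π := Z) (by omega)
    exact ⟨isNoncrossing_of_absLE hZ (hστ.trans hτZ), isNoncrossing_of_absLE hZ hτZ⟩
end
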